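/- For every i ≥ 0, the simple value 1_{i+1} is prudently incomparable (from player 1's perspective) with both 2_i and 3_i: neither direction of <^P_1 holds between 1_{i+1} and 2_i, nor between 1_{i+1} and 3_i. -/
import Mathlib


/-- Values of three-player (more generally `N`-player) games: a leaf is an
unconditional win for the corresponding player, an internal node is the list of
values the player to move may choose from. -/
inductive GV : Type
  | leaf : ℕ → GV
  | node : List GV → GV
  deriving Repr

namespace GV

mutual
/-- Boolean equality on game values. -/
def beq : GV → GV → Bool
  | leaf a, leaf b => a == b
  | node l, node m => beqList l m
  | _, _ => false
def beqList : List GV → List GV → Bool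
  | [], [] => true
  | x :: xs, y :: ys => beq x y && beqList xs ys
  | _, _ => false
end

instance : BEq GV := ⟨beq⟩

/-- `x` is a guaranteed win for player `p`: every leaf of the tree is `p`. -/
inductive IsWin (p : ℕ) : GV → Prop
  | leaf : IsWin p (leaf p)
  | node {l : List GV} : (∀ x ∈ l, IsWin p x) → IsWin p (node l)

/-- `x` is a guaranteed loss for player `p`: no leaf of the tree is `p`. -/
inductive IsLoss (p : ℕ) : GV → Prop
  | leaf {a : ℕ} : a ≠ p → IsLoss p (leaf a)
  | node {l : List GV} : (∀ x ∈ l, IsLoss p x) → IsLoss p (node l)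

/-- The selfish relation `X ≤ₚ Y` ("X is weaker than or equal to Y from the
perspective of player p"): `X = Y`, or a value that is neither a guaranteed win
nor loss is below the guaranteed win `p`, or a guaranteed loss is below any
non-decided value, or the relation is inferred recursively from children. -/
inductive le (p : ℕ) : GV → GV → Prop
  | refl (x) : le p x x
  | winTop {x} : ¬ IsWin p x → ¬ IsLoss p x → le p x (leaf p)
  | lossBot {x y} : IsLoss p x → ¬ IsLoss p y → le p x y
  | left {xs : List GV} {y} : (∀ x ∈ xs, le p x y) → le p (node xs) y
  | pair {xs ys : List GV} : (∀ x ∈ xs, ∀ y ∈ ys, le p x y) → le p (node xs) (node ys)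

/-- Equality of values from player `p`'s perspective: mutual weakness. -/
def eqv (p : ℕ) (x y : GV) : Prop := le p x y ∧ le p y x

/-- `X <ₚ Y`: strictly weaker from player `p`'s perspective. -/
def lt (p : ℕ) (x y : GV) : Prop := le p x y ∧ ¬ eqv p x y

/-- Fuel-indexed version of the prudent relation `<ᴾₚ`. -/
def pLtF (p : ℕ) : ℕ → GV → GV → Prop
  | 0, x, y => lt p x y
  | n+1, node xs, node ys =>
      lt p (node xs) (node ys) ∨
      ((∀ a ∈ xs, ∀ b ∈ ys, pLtF p n a b ∨ (¬ pLtF p n a b ∧ ¬ pLtF p n b a)) ∧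
        ∃ a ∈ xs, ∃ b ∈ ys, pLtF p n a b)
  | _+1, x, y => lt p x y

/-- The prudent relation `X <ᴾₚ Y`: `X <ₚ Y`, or every pair of children is
prudently weaker or prudently incomparable, with at least one strictly
prudently weaker pair.  (The fuel `sizeOf x + sizeOf y` is large enough for
the recursion to have stabilised.) -/
def pLt (p : ℕ) (x y : GV) : Prop := pLtF p (sizeOf x + sizeOf y) x y

/-- Prudent incomparability `X ≄ᴾₚ Y`. -/
def pIncomp (p : ℕ) (x y : GV) : Prop := ¬ pLt p x y ∧ ¬ pLt p y x

/-- The simple value `a_i`:  `a_0 = a` and `a_{i+1} = [b_i, c_i]` with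
`{b,c} = {1,2,3} \ {a}`. -/
def simple : ℕ → ℕ → GV
  | a, 0 => leaf a
  | a, i+1 =>
    if a = 1 then node [simple 2 i, simple 3 i]
    else if a = 2 then node [simple 1 i, simple 3 i]
    else node [simple 1 i, simple 2 i]

/-- The player moving after player `p` in a three-player game. -/
def nextP (p : ℕ) : ℕ := p % 3 + 1

/-- The two players other than `p` in a three-player game. -/
def others (p : ℕ) : ℕ × ℕ :=
  if p = 1 then (2, 3) else if p = 2 then (1, 3) else (1, 2)

/-- Prudent reduction of a list of options by player `p`: options strictly
prudently weaker than another option are discarded, duplicates are merged,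
the incomparable pair `{b_i, c_i}` is exactly `p_{i+1}` and `p_{i+1}` absorbs
`b_i` and `c_i`, and a single remaining simple option is the value itself. -/
inductive pReduce (p : ℕ) : GV → GV → Prop
  | refl (x) : pReduce p x x
  | perm {l l' : List GV} {v} : l.Perm l' → pReduce p (node l') v → pReduce p (node l) v
  | dedup {x : GV} {t : List GV} {v} :
      pReduce p (node (x :: t)) v → pReduce p (node (x :: x :: t)) v
  | drop {x y : GV} {t : List GV} {v} : y ∈ t → pLt p x y →
      pReduce p (node t) v → pReduce p (node (x :: t)) v
  | singleton (a i : ℕ) : pReduce p (node [simple a i]) (simple a i)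
  | merge {i : ℕ} {t : List GV} {v} :
      pReduce p (node (simple p (i+1) :: t)) v →
      pReduce p (node (simple (others p).1 i :: simple (others p).2 i :: t)) v
  | absorb {i b : ℕ} {t : List GV} {v} :
      (b = (others p).1 ∨ b = (others p).2) →
      pReduce p (node (simple p (i+1) :: t)) v →
      pReduce p (node (simple p (i+1) :: simple b i :: t)) v

/-- Selfish reduction of a list of options by player `p`: options strictly
weaker (in the selfish sense `<ₚ`) than another option are discarded,
duplicates are merged, and a single remaining option is the value itself. -/
inductive sReduce (p : ℕ) : GV → GV → Prop
  | refl (x) : sReduce p x x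
  | perm {l l' : List GV} {v} : l.Perm l' → sReduce p (node l') v → sReduce p (node l) v
  | dedup {x : GV} {t : List GV} {v} :
      sReduce p (node (x :: t)) v → sReduce p (node (x :: x :: t)) v
  | drop {x y : GV} {t : List GV} {v} : y ∈ t → lt p x y →
      sReduce p (node t) v → sReduce p (node (x :: t)) v
  | singleton (a i : ℕ) : sReduce p (node [simple a i]) (simple a i)

/-- Bottom-up prudent evaluation of a game tree, `p` being the player to move
at the root: children are reduced from the next player's perspective, then
the list of options is prudently reduced by `p`. -/
inductive gameReduce : ℕ → GV → GV → Prop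
  | leaf (p a) : gameReduce p (leaf a) (leaf a)
  | node {p : ℕ} {l l' : List GV} {v} :
      l.length = l'.length →
      (∀ q ∈ l.zip l', gameReduce (nextP p) q.1 q.2) →
      pReduce p (node l') v → gameReduce p (node l) v

/-- A well-formed three-player game value: leaves in `{1,2,3}`, nonempty nodes. -/
inductive Valid : GV → Prop
  | leaf {a} : (a = 1 ∨ a = 2 ∨ a = 3) → Valid (leaf a)
  | node {l} : l ≠ [] → (∀ x ∈ l, Valid x) → Valid (node l)

/-- The game tree of `x` has depth (number of moves) at most `d`. -/
inductive DepthLe : GV → ℕ → Prop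
  | leaf (a d) : DepthLe (leaf a) d
  | node {l : List GV} {d} : (∀ x ∈ l, DepthLe x d) → DepthLe (node l) (d + 1)

/-- The indifferent-selfish relation `≤₁` for player 1, with the extra axiom
`2 =₁ 3`: player 1 does not distinguish which opponent wins. -/
inductive leI : GV → GV → Prop
  | refl (x) : leI x x
  | indiff23 : leI (leaf 2) (leaf 3)
  | indiff32 : leI (leaf 3) (leaf 2)
  | winTop {x} : ¬ IsWin 1 x → ¬ IsLoss 1 x → leI x (leaf 1)
  | lossBot {x y} : IsLoss 1 x → ¬ IsLoss 1 y → leI x y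
  | left {xs : List GV} {y} : (∀ x ∈ xs, leI x y) → leI (node xs) y
  | pair {xs ys : List GV} : (∀ x ∈ xs, ∀ y ∈ ys, leI x y) → leI (node xs) (node ys)

def eqI (x y : GV) : Prop := leI x y ∧ leI y x
def ltI (x y : GV) : Prop := leI x y ∧ ¬ eqI x y

/-- `n` nested singleton wraps around `x`. -/
def wrap : ℕ → GV → GV
  | 0, x => x
  | n+1, x => node [wrap n x]

/-! ### Three-player Clobber on a `1 × n` board.
A board is a list over `{0,1,2,3}`: `0` is an empty vertex, `i ≥ 1` a token of
player `i`.  A move clobbers an adjacent token of another player. -/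

/-- All boards resulting from a move of player `q` on board `b`. -/
def movesOf (b : List ℕ) (q : ℕ) : List (List ℕ) :=
  (List.range b.length).flatMap fun i =>
    (([i+1, i-1]).filter fun j =>
        decide (j < b.length) && decide (j ≠ i) && (b.getD i 0 == q) &&
        (b.getD j 0 != 0) && (b.getD j 0 != q)).map
      fun j => (b.set j q).set i 0

def canMove (b : List ℕ) (q : ℕ) : Bool := !(movesOf b q).isEmpty

/-- The first player, starting cyclically from `p`, who has a legal move
(players unable to move skip their turn). -/
def firstMover (b : List ℕ) (p : ℕ) : Option ℕ :=
  if canMove b p then some p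
  else if canMove b (nextP p) then some (nextP p)
  else if canMove b (nextP (nextP p)) then some (nextP (nextP p))
  else none

/-- A node all of whose (distinct) children are the single leaf `a` has value `a`. -/
def mkNode : List GV → GV
  | [leaf a] => leaf a
  | l => node l

/-- Bottom-up value of a Clobber position: `last` is the last player who moved;
if nobody can move the value is the leaf `last`, otherwise it is the list of
the distinct values of the moves of the next player able to move. -/
def clobberVal : ℕ → List ℕ → ℕ → ℕ → GV
  | 0, _, _, last => leaf last
  | fuel+1, b, p, last =>
    match firstMover b p with
    | none => leaf last
    | some q => mkNode (((movesOf b q).map fun b' => clobberVal fuel b' (nextP q) q).eraseDups)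

/-- The value of a Clobber board, player 1 moving first. -/
def clobber (b : List ℕ) : GV := clobberVal (b.length + 1) b 1 0

/-- Number of tokens on a board. -/
def tokens (b : List ℕ) : ℕ := (b.filter fun t => t ≠ 0).length

end GV

namespace GV
lemma simple_one (i : ℕ) : simple 1 (i+1) = node [simple 2 i, simple 3 i] := by simp [simple]
lemma simple_two (i : ℕ) : simple 2 (i+1) = node [simple 1 i, simple 3 i] := by norm_num [simple]
lemma simple_three (i : ℕ) : simple 3 (i+1) = node [simple 1 i, simple 2 i] := by norm_num [simple]
lemma simple_zero (a : ℕ) : simple a 0 = leaf a := rfl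

lemma pltf_zero (p : ℕ) (x y : GV) : pLtF p 0 x y ↔ lt p x y := Iff.rfl
lemma pltf_node (p n : ℕ) (xs ys : List GV) :
    pLtF p (n+1) (node xs) (node ys) ↔
      lt p (node xs) (node ys) ∨
      ((∀ a ∈ xs, ∀ b ∈ ys, pLtF p n a b ∨ (¬ pLtF p n a b ∧ ¬ pLtF p n b a)) ∧
        ∃ a ∈ xs, ∃ b ∈ ys, pLtF p n a b) := Iff.rfl
lemma pltf_leaf_right (p n a : ℕ) (x : GV) : pLtF p n x (leaf a) ↔ lt p x (leaf a) := by
  cases n with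
  | zero => exact Iff.rfl
  | succ n => cases x <;> exact Iff.rfl
lemma pltf_leaf_left (p n a : ℕ) (y : GV) : pLtF p n (leaf a) y ↔ lt p (leaf a) y := by
  cases n with
  | zero => exact Iff.rfl
  | succ n => cases y <;> exact Iff.rfl

-- test inversion behaviour
example (b : ℕ) (h : le 1 (leaf 1) (leaf b)) (hb : b ≠ 1) : False := by
  cases h with
  | refl => exact hb rfl
  | winTop h1 h2 => exact h1 (IsWin.leaf)
  | lossBot h1 h2 => cases h1 with | leaf h => exact h rfl
end GV
namespace GV
lemma isLoss_leaf2 : IsLoss 1 (leaf 2) := IsLoss.leaf (by omega)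
lemma isLoss_leaf3 : IsLoss 1 (leaf 3) := IsLoss.leaf (by omega)
lemma isLoss_oneone : IsLoss 1 (simple 1 1) := by
  rw [simple_one]
  exact IsLoss.node (by
    intro x hx
    simp only [List.mem_cons, List.mem_singleton, List.not_mem_nil, or_false] at hx
    rcases hx with rfl | rfl
    · exact isLoss_leaf2
    · exact isLoss_leaf3)
lemma not_isLoss_leaf1 : ¬ IsLoss 1 (leaf 1) := by
  intro h; cases h with | leaf h => exact h rfl

lemma not_loss : ∀ j a, (a = 1 ∨ a = 2 ∨ a = 3) → (2 ≤ j ∨ (j = 1 ∧ a ≠ 1)) →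
    ¬ IsLoss 1 (simple a j) := by
  intro j
  induction j with
  | zero => intro a _ hj; omega
  | succ j IH =>
    intro a ha hj h
    rcases Nat.eq_zero_or_pos j with rfl | hj1
    · -- j+1 = 1, so a ≠ 1
      have hane : a ≠ 1 := by omega
      rcases ha with rfl | rfl | rfl
      · omega
      · rw [simple_two] at h; cases h with
        | node hl => exact not_isLoss_leaf1 (hl (simple 1 0) (by simp))
      · rw [simple_three] at h; cases h with
        | node hl => exact not_isLoss_leaf1 (hl (simple 1 0) (by simp))
    · -- j ≥ 1: pick a child with player ∈ {2,3}
      rcases ha with rfl | rfl | rfl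
      · rw [simple_one] at h; cases h with
        | node hl => exact IH 2 (by omega) (by omega) (hl (simple 2 j) (by simp))
      · rw [simple_two] at h; cases h with
        | node hl => exact IH 3 (by omega) (by omega) (hl (simple 3 j) (by simp))
      · rw [simple_three] at h; cases h with
        | node hl => exact IH 2 (by omega) (by omega) (hl (simple 2 j) (by simp))

lemma simple_is_node (b i : ℕ) (hb : b = 1 ∨ b = 2 ∨ b = 3) (hi : 1 ≤ i) :
    ∃ l, simple b i = node l := by
  obtain ⟨i', rfl⟩ : ∃ i', i = i' + 1 := ⟨i - 1, by omega⟩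
  rcases hb with rfl | rfl | rfl
  · exact ⟨_, simple_one i'⟩
  · exact ⟨_, simple_two i'⟩
  · exact ⟨_, simple_three i'⟩

lemma simple_ne_leaf (b i c : ℕ) (hbc : ¬(i = 0 ∧ b = c)) : simple b i ≠ leaf c := by
  intro h
  cases i with
  | zero => rw [simple_zero] at h; injection h with h; exact hbc ⟨rfl, h⟩
  | succ i =>
    unfold simple at h
    split at h
    · cases h
    · split at h <;> cases h

lemma simple_inj : ∀ j i a b, (a = 1 ∨ a = 2 ∨ a = 3) → (b = 1 ∨ b = 2 ∨ b = 3) →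
    simple a j = simple b i → a = b ∧ j = i := by
  intro j
  induction j with
  | zero =>
    intro i a b _ hb h
    cases i with
    | zero => rw [simple_zero, simple_zero] at h; injection h with h; exact ⟨h, rfl⟩
    | succ i => exact absurd h.symm (simple_ne_leaf b (i+1) a (by omega))
  | succ j IH =>
    intro i a b ha hb h
    cases i with
    | zero => exact absurd h (simple_ne_leaf a (j+1) b (by omega))
    | succ i =>
      rcases ha with rfl | rfl | rfl <;> rcases hb with rfl | rfl | rfl <;>
        simp only [simple_one, simple_two, simple_three, node.injEq, List.cons.injEq,
          and_true] at h
      · exact ⟨rfl, by obtain ⟨h1, -⟩ := h; obtain ⟨-, h2⟩ := IH i 2 2 (by omega) (by omega) h1; omega⟩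
      · obtain ⟨h1, -⟩ := h; obtain ⟨h2, -⟩ := IH i 2 1 (by omega) (by omega) h1; omega
      · obtain ⟨h1, -⟩ := h; obtain ⟨h2, -⟩ := IH i 2 1 (by omega) (by omega) h1; omega
      · obtain ⟨h1, -⟩ := h; obtain ⟨h2, -⟩ := IH i 1 2 (by omega) (by omega) h1; omega
      · exact ⟨rfl, by obtain ⟨h1, -⟩ := h; obtain ⟨-, h2⟩ := IH i 1 1 (by omega) (by omega) h1; omega⟩
      · obtain ⟨-, h1⟩ := h; obtain ⟨h2, -⟩ := IH i 3 2 (by omega) (by omega) h1; omega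
      · obtain ⟨h1, -⟩ := h; obtain ⟨h2, -⟩ := IH i 1 2 (by omega) (by omega) h1; omega
      · obtain ⟨-, h1⟩ := h; obtain ⟨h2, -⟩ := IH i 2 3 (by omega) (by omega) h1; omega
      · exact ⟨rfl, by obtain ⟨h1, -⟩ := h; obtain ⟨-, h2⟩ := IH i 1 1 (by omega) (by omega) h1; omega⟩
end GV
namespace GV

lemma nle_leaf1 (y : GV) (hy : y ≠ leaf 1) : ¬ le 1 (leaf 1) y := by
  intro h
  cases h with
  | refl => exact hy rfl
  | winTop h1 h2 => exact h1 IsWin.leaf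
  | lossBot h1 h2 => exact not_isLoss_leaf1 h1

lemma mem_pair_left (x y : GV) : x ∈ [x, y] := by simp
lemma mem_pair_right (x y : GV) : y ∈ [x, y] := by simp

/-- main non-comparability lemma for the selfish relation -/
theorem nle : ∀ j i a b, (a = 1 ∨ a = 2 ∨ a = 3) → (b = 1 ∨ b = 2 ∨ b = 3) →
    (2 ≤ j ∨ (j = 1 ∧ a ≠ 1)) → ¬(i = 0 ∧ b = 1) → ¬(a = b ∧ i = j) →
    ¬(j = 2 ∧ i = 1 ∧ ((a = 2 ∧ b = 3) ∨ (a = 3 ∧ b = 2))) →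
    ¬ le 1 (simple a j) (simple b i) := by
  intro j
  induction j using Nat.strong_induction_on with
  | _ j IH =>
  intro i a b ha hb hj hi0 hne hexc hle
  obtain ⟨j', rfl⟩ : ∃ j', j = j' + 1 := ⟨j - 1, by omega⟩
  obtain ⟨p, q, hX⟩ :
      ∃ p q, simple a (j'+1) = node [simple p j', simple q j'] := by
    rcases ha with rfl | rfl | rfl
    · exact ⟨2, 3, simple_one j'⟩
    · exact ⟨1, 3, simple_two j'⟩
    · exact ⟨1, 2, simple_three j'⟩
  rw [hX] at hle
  generalize hY : simple b i = Y at hle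
  cases hle with
  | refl =>
    obtain ⟨h1, h2⟩ := simple_inj i (j'+1) b a hb ha (hY.trans hX.symm)
    exact hne ⟨h1.symm, h2⟩
  | winTop h1 h2 =>
    exact simple_ne_leaf b i 1 hi0 hY
  | lossBot h1 h2 =>
    rw [← hX] at h1
    exact not_loss (j'+1) a ha hj h1
  | left hall =>
    subst hY
    rcases ha with rfl | rfl | rfl
    · rw [simple_one, node.injEq, List.cons.injEq, List.cons.injEq] at hX
      obtain ⟨h2, h3, -⟩ := hX
      rw [← h2, ← h3] at hall
      by_cases hbl : (b = 2 ∧ i = j') ∨ (j' = 2 ∧ i = 1 ∧ b = 3)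
      · exact IH j' (by omega) i 3 b (by omega) hb (by omega) hi0 (by omega) (by omega)
          (hall _ (mem_pair_right _ _))
      · exact IH j' (by omega) i 2 b (by omega) hb (by omega) hi0 (by omega) (by omega)
          (hall _ (mem_pair_left _ _))
    · rw [simple_two, node.injEq, List.cons.injEq, List.cons.injEq] at hX
      obtain ⟨h1, h3, -⟩ := hX
      rw [← h1, ← h3] at hall
      rcases Nat.eq_zero_or_pos j' with rfl | hj1
      · exact nle_leaf1 (simple b i) (simple_ne_leaf b i 1 hi0)
          (hall _ (mem_pair_left _ _))
      · by_cases hbl : (b = 3 ∧ i = j') ∨ (j' = 2 ∧ i = 1 ∧ b = 2)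
        · exact IH j' (by omega) i 1 b (by omega) hb (by omega) hi0 (by omega) (by omega)
            (hall _ (mem_pair_left _ _))
        · exact IH j' (by omega) i 3 b (by omega) hb (by omega) hi0 (by omega) (by omega)
            (hall _ (mem_pair_right _ _))
    · rw [simple_three, node.injEq, List.cons.injEq, List.cons.injEq] at hX
      obtain ⟨h1, h2, -⟩ := hX
      rw [← h1, ← h2] at hall
      rcases Nat.eq_zero_or_pos j' with rfl | hj1
      · exact nle_leaf1 (simple b i) (simple_ne_leaf b i 1 hi0)
          (hall _ (mem_pair_left _ _))
      · by_cases hbl : (b = 2 ∧ i = j') ∨ (j' = 2 ∧ i = 1 ∧ b = 3)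
        · exact IH j' (by omega) i 1 b (by omega) hb (by omega) hi0 (by omega) (by omega)
            (hall _ (mem_pair_left _ _))
        · exact IH j' (by omega) i 2 b (by omega) hb (by omega) hi0 (by omega) (by omega)
            (hall _ (mem_pair_right _ _))
  | pair hall =>
    cases i with
    | zero =>
      rcases hb with rfl | rfl | rfl <;> exact GV.noConfusion hY
    | succ i'' =>
      have hi1 : ¬(i'' + 1 = 0 ∧ b = 1) := by omega
      -- expand ys
      rcases hb with rfl | rfl | rfl
      -- b = 1 : ys = [2_{i''}, 3_{i''}]
      · rw [simple_one, node.injEq] at hY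
        subst hY
        rcases ha with rfl | rfl | rfl
        · -- a = 1, zp = 2 = first child
          rw [simple_one, node.injEq, List.cons.injEq, List.cons.injEq] at hX
          obtain ⟨h2, h3, -⟩ := hX; rw [← h2, ← h3] at hall
          by_cases hc : j' = 2 ∧ i'' = 1
          · exact IH j' (by omega) i'' 2 2 (by omega) (by omega) (by omega) (by omega)
              (by omega) (by omega) (hall _ (mem_pair_left _ _) _ (mem_pair_left _ _))
          · exact IH j' (by omega) i'' 2 3 (by omega) (by omega) (by omega) (by omega)
              (by omega) (by omega) (hall _ (mem_pair_left _ _) _ (mem_pair_right _ _))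
        · -- a = 2, children [1_{j'},3_{j'}], zp = 3 = second child
          rw [simple_two, node.injEq, List.cons.injEq, List.cons.injEq] at hX
          obtain ⟨h1, h3, -⟩ := hX; rw [← h1, ← h3] at hall
          rcases Nat.eq_zero_or_pos j' with rfl | hj1
          · exact nle_leaf1 _ (simple_ne_leaf 2 i'' 1 (by omega))
              (hall _ (mem_pair_left _ _) _ (mem_pair_left _ _))
          · by_cases hc : j' = 2 ∧ i'' = 1
            · exact IH j' (by omega) i'' 3 3 (by omega) (by omega) (by omega) (by omega)
                (by omega) (by omega) (hall _ (mem_pair_right _ _) _ (mem_pair_right _ _))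
            · exact IH j' (by omega) i'' 3 2 (by omega) (by omega) (by omega) (by omega)
                (by omega) (by omega) (hall _ (mem_pair_right _ _) _ (mem_pair_left _ _))
        · -- a = 3, children [1_{j'},2_{j'}], zp = 2 = second child
          rw [simple_three, node.injEq, List.cons.injEq, List.cons.injEq] at hX
          obtain ⟨h1, h2, -⟩ := hX; rw [← h1, ← h2] at hall
          rcases Nat.eq_zero_or_pos j' with rfl | hj1
          · exact nle_leaf1 _ (simple_ne_leaf 2 i'' 1 (by omega))
              (hall _ (mem_pair_left _ _) _ (mem_pair_left _ _))
          · by_cases hc : j' = 2 ∧ i'' = 1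
            · exact IH j' (by omega) i'' 2 2 (by omega) (by omega) (by omega) (by omega)
                (by omega) (by omega) (hall _ (mem_pair_right _ _) _ (mem_pair_left _ _))
            · exact IH j' (by omega) i'' 2 3 (by omega) (by omega) (by omega) (by omega)
                (by omega) (by omega) (hall _ (mem_pair_right _ _) _ (mem_pair_right _ _))
      -- b = 2 : ys = [1_{i''}, 3_{i''}]
      · rw [simple_two, node.injEq] at hY
        subst hY
        rcases ha with rfl | rfl | rfl
        · rw [simple_one, node.injEq, List.cons.injEq, List.cons.injEq] at hX
          obtain ⟨h2, h3, -⟩ := hX; rw [← h2, ← h3] at hall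
          rcases Nat.eq_zero_or_pos i'' with rfl | hi2
          · exact IH j' (by omega) 0 2 3 (by omega) (by omega) (by omega) (by omega)
              (by omega) (by omega) (hall _ (mem_pair_left _ _) _ (mem_pair_right _ _))
          · exact IH j' (by omega) i'' 2 1 (by omega) (by omega) (by omega) (by omega)
              (by omega) (by omega) (hall _ (mem_pair_left _ _) _ (mem_pair_left _ _))
        · rw [simple_two, node.injEq, List.cons.injEq, List.cons.injEq] at hX
          obtain ⟨h1, h3, -⟩ := hX; rw [← h1, ← h3] at hall
          rcases Nat.eq_zero_or_pos j' with rfl | hj1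
          · exact nle_leaf1 _ (simple_ne_leaf 3 i'' 1 (by omega))
              (hall _ (mem_pair_left _ _) _ (mem_pair_right _ _))
          · rcases Nat.eq_zero_or_pos i'' with rfl | hi2
            · exact IH j' (by omega) 0 3 3 (by omega) (by omega) (by omega) (by omega)
                (by omega) (by omega) (hall _ (mem_pair_right _ _) _ (mem_pair_right _ _))
            · exact IH j' (by omega) i'' 3 1 (by omega) (by omega) (by omega) (by omega)
                (by omega) (by omega) (hall _ (mem_pair_right _ _) _ (mem_pair_left _ _))
        · rw [simple_three, node.injEq, List.cons.injEq, List.cons.injEq] at hX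
          obtain ⟨h1, h2, -⟩ := hX; rw [← h1, ← h2] at hall
          rcases Nat.eq_zero_or_pos j' with rfl | hj1
          · exact nle_leaf1 _ (simple_ne_leaf 3 i'' 1 (by omega))
              (hall _ (mem_pair_left _ _) _ (mem_pair_right _ _))
          · rcases Nat.eq_zero_or_pos i'' with rfl | hi2
            · exact IH j' (by omega) 0 2 3 (by omega) (by omega) (by omega) (by omega)
                (by omega) (by omega) (hall _ (mem_pair_right _ _) _ (mem_pair_right _ _))
            · exact IH j' (by omega) i'' 2 1 (by omega) (by omega) (by omega) (by omega)
                (by omega) (by omega) (hall _ (mem_pair_right _ _) _ (mem_pair_left _ _))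
      -- b = 3 : ys = [1_{i''}, 2_{i''}]
      · rw [simple_three, node.injEq] at hY
        subst hY
        rcases ha with rfl | rfl | rfl
        · rw [simple_one, node.injEq, List.cons.injEq, List.cons.injEq] at hX
          obtain ⟨h2, h3, -⟩ := hX; rw [← h2, ← h3] at hall
          rcases Nat.eq_zero_or_pos i'' with rfl | hi2
          · exact IH j' (by omega) 0 2 2 (by omega) (by omega) (by omega) (by omega)
              (by omega) (by omega) (hall _ (mem_pair_left _ _) _ (mem_pair_right _ _))
          · exact IH j' (by omega) i'' 2 1 (by omega) (by omega) (by omega) (by omega)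
              (by omega) (by omega) (hall _ (mem_pair_left _ _) _ (mem_pair_left _ _))
        · rw [simple_two, node.injEq, List.cons.injEq, List.cons.injEq] at hX
          obtain ⟨h1, h3, -⟩ := hX; rw [← h1, ← h3] at hall
          rcases Nat.eq_zero_or_pos j' with rfl | hj1
          · exact nle_leaf1 _ (simple_ne_leaf 2 i'' 1 (by omega))
              (hall _ (mem_pair_left _ _) _ (mem_pair_right _ _))
          · rcases Nat.eq_zero_or_pos i'' with rfl | hi2
            · exact IH j' (by omega) 0 3 2 (by omega) (by omega) (by omega) (by omega)
                (by omega) (by omega) (hall _ (mem_pair_right _ _) _ (mem_pair_right _ _))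
            · exact IH j' (by omega) i'' 3 1 (by omega) (by omega) (by omega) (by omega)
                (by omega) (by omega) (hall _ (mem_pair_right _ _) _ (mem_pair_left _ _))
        · rw [simple_three, node.injEq, List.cons.injEq, List.cons.injEq] at hX
          obtain ⟨h1, h2, -⟩ := hX; rw [← h1, ← h2] at hall
          rcases Nat.eq_zero_or_pos j' with rfl | hj1
          · exact nle_leaf1 _ (simple_ne_leaf 2 i'' 1 (by omega))
              (hall _ (mem_pair_left _ _) _ (mem_pair_right _ _))
          · rcases Nat.eq_zero_or_pos i'' with rfl | hi2
            · exact IH j' (by omega) 0 2 2 (by omega) (by omega) (by omega) (by omega)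
                (by omega) (by omega) (hall _ (mem_pair_right _ _) _ (mem_pair_right _ _))
            · exact IH j' (by omega) i'' 2 1 (by omega) (by omega) (by omega) (by omega)
                (by omega) (by omega) (hall _ (mem_pair_right _ _) _ (mem_pair_left _ _))

end GV
namespace GV

def PT (t : ℕ) (x y : GV) : Prop := ∀ n, pLtF 1 n x y ↔ t ≤ n
def PF (x y : GV) : Prop := ∀ n, ¬ pLtF 1 n x y

lemma lt_pltf {x y : GV} (h : lt 1 x y) : ∀ n, pLtF 1 n x y := by
  intro n
  cases n with
  | zero => exact h
  | succ n => cases x <;> cases y <;> first | exact h | exact Or.inl h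

lemma PT_of_lt {x y : GV} (h : lt 1 x y) : PT 0 x y :=
  fun n => iff_of_true (lt_pltf h n) (Nat.zero_le n)

lemma PF_leaf_right {a : ℕ} {x : GV} (h : ¬ le 1 x (leaf a)) : PF x (leaf a) :=
  fun n h' => h ((pltf_leaf_right 1 n a x).1 h').1

lemma PF_leaf_left {a : ℕ} {y : GV} (h : ¬ le 1 (leaf a) y) : PF (leaf a) y :=
  fun n h' => h ((pltf_leaf_left 1 n a y).1 h').1

lemma lt_mk {x y : GV} (h1 : le 1 x y) (h2 : ¬ le 1 y x) : lt 1 x y :=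
  ⟨h1, fun he => h2 he.2⟩

lemma not_lt_of_nle {x y : GV} (h : ¬ le 1 x y) : ¬ lt 1 x y := fun h' => h h'.1

lemma mem_pair {z x y : GV} (h : z ∈ [x, y]) : z = x ∨ z = y := by
  simpa using h

lemma POS {t : ℕ} {x1 x2 y1 y2 : GV}
    (hlt : ¬ lt 1 (node [x1,x2]) (node [y1,y2]))
    (h11 : PT t x1 y1 ∨ PF x1 y1) (h12 : PT t x1 y2 ∨ PF x1 y2)
    (h21 : PT t x2 y1 ∨ PF x2 y1) (h22 : PT t x2 y2 ∨ PF x2 y2)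
    (r11 : PF y1 x1) (r12 : PF y2 x1) (r21 : PF y1 x2) (r22 : PF y2 x2)
    (hw : PT t x1 y1 ∨ PT t x1 y2 ∨ PT t x2 y1 ∨ PT t x2 y2) :
    PT (t+1) (node [x1,x2]) (node [y1,y2]) := by
  intro n
  cases n with
  | zero => exact iff_of_false hlt (by omega)
  | succ n =>
    rw [pltf_node]
    constructor
    · rintro (h | ⟨-, hex⟩)
      · exact absurd h hlt
      · obtain ⟨a, ha, b, hb, hab⟩ := hex
        have hn : t ≤ n := by
          rcases mem_pair ha with rfl | rfl <;> rcases mem_pair hb with rfl | rfl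
          · rcases h11 with h | h
            · exact (h n).1 hab
            · exact absurd hab (h n)
          · rcases h12 with h | h
            · exact (h n).1 hab
            · exact absurd hab (h n)
          · rcases h21 with h | h
            · exact (h n).1 hab
            · exact absurd hab (h n)
          · rcases h22 with h | h
            · exact (h n).1 hab
            · exact absurd hab (h n)
        omega
    · intro hn
      have htn : t ≤ n := by omega
      right
      constructor
      · intro a ha b hb
        rcases mem_pair ha with rfl | rfl <;> rcases mem_pair hb with rfl | rfl
        · rcases h11 with h | h
          · exact Or.inl ((h n).2 htn)
          · exact Or.inr ⟨h n, r11 n⟩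
        · rcases h12 with h | h
          · exact Or.inl ((h n).2 htn)
          · exact Or.inr ⟨h n, r12 n⟩
        · rcases h21 with h | h
          · exact Or.inl ((h n).2 htn)
          · exact Or.inr ⟨h n, r21 n⟩
        · rcases h22 with h | h
          · exact Or.inl ((h n).2 htn)
          · exact Or.inr ⟨h n, r22 n⟩
      · rcases hw with h | h | h | h
        · exact ⟨x1, mem_pair_left _ _, y1, mem_pair_left _ _, (h n).2 htn⟩
        · exact ⟨x1, mem_pair_left _ _, y2, mem_pair_right _ _, (h n).2 htn⟩
        · exact ⟨x2, mem_pair_right _ _, y1, mem_pair_left _ _, (h n).2 htn⟩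
        · exact ⟨x2, mem_pair_right _ _, y2, mem_pair_right _ _, (h n).2 htn⟩

lemma NEGA {x1 x2 y1 y2 : GV}
    (hlt : ¬ lt 1 (node [x1,x2]) (node [y1,y2]))
    (h11 : PF x1 y1) (h12 : PF x1 y2) (h21 : PF x2 y1) (h22 : PF x2 y2) :
    PF (node [x1,x2]) (node [y1,y2]) := by
  intro n
  cases n with
  | zero => exact hlt
  | succ n =>
    rw [pltf_node]
    rintro (h | ⟨-, hex⟩)
    · exact hlt h
    · obtain ⟨a, ha, b, hb, hab⟩ := hex
      rcases mem_pair ha with rfl | rfl <;> rcases mem_pair hb with rfl | rfl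
      · exact h11 n hab
      · exact h12 n hab
      · exact h21 n hab
      · exact h22 n hab

lemma NEGB {t : ℕ} {x1 x2 y1 y2 : GV}
    (hlt : ¬ lt 1 (node [x1,x2]) (node [y1,y2]))
    (h11 : PT t x1 y1 ∨ PF x1 y1) (h12 : PT t x1 y2 ∨ PF x1 y2)
    (h21 : PT t x2 y1 ∨ PF x2 y1) (h22 : PT t x2 y2 ∨ PF x2 y2)
    (hviol : (PF x1 y1 ∧ PT t y1 x1) ∨ (PF x1 y2 ∧ PT t y2 x1) ∨
             (PF x2 y1 ∧ PT t y1 x2) ∨ (PF x2 y2 ∧ PT t y2 x2)) :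
    PF (node [x1,x2]) (node [y1,y2]) := by
  intro n
  cases n with
  | zero => exact hlt
  | succ n =>
    rw [pltf_node]
    rintro (h | ⟨hall, hex⟩)
    · exact hlt h
    · obtain ⟨a, ha, b, hb, hab⟩ := hex
      have htn : t ≤ n := by
        rcases mem_pair ha with rfl | rfl <;> rcases mem_pair hb with rfl | rfl
        · rcases h11 with h | h
          · exact (h n).1 hab
          · exact absurd hab (h n)
        · rcases h12 with h | h
          · exact (h n).1 hab
          · exact absurd hab (h n)
        · rcases h21 with h | h
          · exact (h n).1 hab
          · exact absurd hab (h n)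
        · rcases h22 with h | h
          · exact (h n).1 hab
          · exact absurd hab (h n)
      rcases hviol with ⟨hf, hr⟩ | ⟨hf, hr⟩ | ⟨hf, hr⟩ | ⟨hf, hr⟩
      · rcases hall x1 (mem_pair_left _ _) y1 (mem_pair_left _ _) with h | ⟨-, h⟩
        · exact hf n h
        · exact h ((hr n).2 htn)
      · rcases hall x1 (mem_pair_left _ _) y2 (mem_pair_right _ _) with h | ⟨-, h⟩
        · exact hf n h
        · exact h ((hr n).2 htn)
      · rcases hall x2 (mem_pair_right _ _) y1 (mem_pair_left _ _) with h | ⟨-, h⟩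
        · exact hf n h
        · exact h ((hr n).2 htn)
      · rcases hall x2 (mem_pair_right _ _) y2 (mem_pair_right _ _) with h | ⟨-, h⟩
        · exact hf n h
        · exact h ((hr n).2 htn)

end GV
namespace GV

lemma isWin_leaf_eq {p a : ℕ} (h : IsWin p (leaf a)) : a = p := by cases h; rfl

lemma not_isWin_21 : ¬ IsWin 1 (simple 2 1) := by
  rw [simple_two]
  intro h
  cases h with
  | node hl => exact absurd (isWin_leaf_eq (hl (simple 3 0) (mem_pair_right _ _))) (by omega)

lemma not_isWin_31 : ¬ IsWin 1 (simple 3 1) := by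
  rw [simple_three]
  intro h
  cases h with
  | node hl => exact absurd (isWin_leaf_eq (hl (simple 2 0) (mem_pair_right _ _))) (by omega)

lemma nle_leaf_leaf {a b : ℕ} (hab : a ≠ b) (hb1 : b ≠ 1) : ¬ le 1 (leaf a) (leaf b) := by
  intro h
  cases h with
  | refl => exact hab rfl
  | winTop h1 h2 => exact hb1 rfl
  | lossBot h1 h2 => exact h2 (IsLoss.leaf hb1)

lemma nle_oneone_leaf {c : ℕ} (hc : c = 2 ∨ c = 3) : ¬ le 1 (simple 1 1) (leaf c) := by
  rw [simple_one]
  intro h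
  cases h with
  | winTop h1 h2 => omega
  | lossBot h1 h2 => exact h2 (IsLoss.leaf (by omega))
  | left hall =>
    rcases hc with rfl | rfl
    · exact nle_leaf_leaf (by omega) (by omega) (hall (simple 3 0) (mem_pair_right _ _))
    · exact nle_leaf_leaf (by omega) (by omega) (hall (simple 2 0) (mem_pair_left _ _))

lemma nle_leaf_oneone {c : ℕ} (hc : c = 2 ∨ c = 3) : ¬ le 1 (leaf c) (simple 1 1) := by
  rw [simple_one]
  intro h
  cases h with
  | lossBot h1 h2 =>
    exact h2 (IsLoss.node (by
      intro x hx
      rcases mem_pair hx with rfl | rfl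
      · exact isLoss_leaf2
      · exact isLoss_leaf3))

-- selfish lt facts at boundary (1,0)
lemma lt_11_10 : lt 1 (simple 1 1) (simple 1 0) :=
  lt_mk (le.lossBot isLoss_oneone not_isLoss_leaf1)
    (nle_leaf1 _ (simple_ne_leaf 1 1 1 (by omega)))
lemma lt_21_10 : lt 1 (simple 2 1) (simple 1 0) :=
  lt_mk (le.winTop not_isWin_21 (not_loss 1 2 (by omega) (by omega)))
    (nle_leaf1 _ (simple_ne_leaf 2 1 1 (by omega)))
lemma lt_31_10 : lt 1 (simple 3 1) (simple 1 0) :=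
  lt_mk (le.winTop not_isWin_31 (not_loss 1 3 (by omega) (by omega)))
    (nle_leaf1 _ (simple_ne_leaf 3 1 1 (by omega)))
lemma lt_20_21 : lt 1 (simple 2 0) (simple 2 1) :=
  lt_mk (le.lossBot isLoss_leaf2 (not_loss 1 2 (by omega) (by omega)))
    (nle 1 0 2 2 (by omega) (by omega) (by omega) (by omega) (by omega) (by omega))
lemma lt_20_31 : lt 1 (simple 2 0) (simple 3 1) :=
  lt_mk (le.lossBot isLoss_leaf2 (not_loss 1 3 (by omega) (by omega)))
    (nle 1 0 3 2 (by omega) (by omega) (by omega) (by omega) (by omega) (by omega))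
lemma lt_30_21 : lt 1 (simple 3 0) (simple 2 1) :=
  lt_mk (le.lossBot isLoss_leaf3 (not_loss 1 2 (by omega) (by omega)))
    (nle 1 0 2 3 (by omega) (by omega) (by omega) (by omega) (by omega) (by omega))
lemma lt_30_31 : lt 1 (simple 3 0) (simple 3 1) :=
  lt_mk (le.lossBot isLoss_leaf3 (not_loss 1 3 (by omega) (by omega)))
    (nle 1 0 3 3 (by omega) (by omega) (by omega) (by omega) (by omega) (by omega))

-- selfish lt facts at boundary (2,1)
lemma lt_22_31 : lt 1 (simple 2 2) (simple 3 1) := by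
  refine lt_mk ?_ (nle 1 2 3 2 (by omega) (by omega) (by omega) (by omega) (by omega) (by omega))
  rw [simple_two]
  apply le.left
  intro x hx
  rcases mem_pair hx with rfl | rfl
  · exact le.lossBot isLoss_oneone (not_loss 1 3 (by omega) (by omega))
  · exact le.refl _
lemma lt_32_21 : lt 1 (simple 3 2) (simple 2 1) := by
  refine lt_mk ?_ (nle 1 2 2 3 (by omega) (by omega) (by omega) (by omega) (by omega) (by omega))
  rw [simple_three]
  apply le.left
  intro x hx
  rcases mem_pair hx with rfl | rfl
  · exact le.lossBot isLoss_oneone (not_loss 1 2 (by omega) (by omega))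
  · exact le.refl _
lemma lt_11_12 : lt 1 (simple 1 1) (simple 1 2) :=
  lt_mk (le.lossBot isLoss_oneone (not_loss 2 1 (by omega) (by omega)))
    (nle 2 1 1 1 (by omega) (by omega) (by omega) (by omega) (by omega) (by omega))
lemma lt_11_22 : lt 1 (simple 1 1) (simple 2 2) :=
  lt_mk (le.lossBot isLoss_oneone (not_loss 2 2 (by omega) (by omega)))
    (nle 2 1 2 1 (by omega) (by omega) (by omega) (by omega) (by omega) (by omega))
lemma lt_11_32 : lt 1 (simple 1 1) (simple 3 2) :=
  lt_mk (le.lossBot isLoss_oneone (not_loss 2 3 (by omega) (by omega)))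
    (nle 2 1 3 1 (by omega) (by omega) (by omega) (by omega) (by omega) (by omega))

-- PF facts at boundary (1,0)
lemma pf_10_11 : PF (simple 1 0) (simple 1 1) :=
  PF_leaf_left (nle_leaf1 _ (simple_ne_leaf 1 1 1 (by omega)))
lemma pf_10_21 : PF (simple 1 0) (simple 2 1) :=
  PF_leaf_left (nle_leaf1 _ (simple_ne_leaf 2 1 1 (by omega)))
lemma pf_10_31 : PF (simple 1 0) (simple 3 1) :=
  PF_leaf_left (nle_leaf1 _ (simple_ne_leaf 3 1 1 (by omega)))
lemma pf_20_11 : PF (simple 2 0) (simple 1 1) :=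
  PF_leaf_left (nle_leaf_oneone (by omega))
lemma pf_30_11 : PF (simple 3 0) (simple 1 1) :=
  PF_leaf_left (nle_leaf_oneone (by omega))
lemma pf_11_20 : PF (simple 1 1) (simple 2 0) :=
  PF_leaf_right (nle_oneone_leaf (by omega))
lemma pf_11_30 : PF (simple 1 1) (simple 3 0) :=
  PF_leaf_right (nle_oneone_leaf (by omega))
lemma pf_21_20 : PF (simple 2 1) (simple 2 0) :=
  PF_leaf_right (nle 1 0 2 2 (by omega) (by omega) (by omega) (by omega) (by omega) (by omega))
lemma pf_21_30 : PF (simple 2 1) (simple 3 0) :=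
  PF_leaf_right (nle 1 0 2 3 (by omega) (by omega) (by omega) (by omega) (by omega) (by omega))
lemma pf_31_20 : PF (simple 3 1) (simple 2 0) :=
  PF_leaf_right (nle 1 0 3 2 (by omega) (by omega) (by omega) (by omega) (by omega) (by omega))
lemma pf_31_30 : PF (simple 3 1) (simple 3 0) :=
  PF_leaf_right (nle 1 0 3 3 (by omega) (by omega) (by omega) (by omega) (by omega) (by omega))

end GV
namespace GV

lemma simple_1_1 : simple 1 1 = node [simple 2 0, simple 3 0] := simple_one 0
lemma simple_2_1 : simple 2 1 = node [simple 1 0, simple 3 0] := simple_two 0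
lemma simple_3_1 : simple 3 1 = node [simple 1 0, simple 2 0] := simple_three 0

def AF (t e : ℕ) : Prop :=
  PT t (simple 2 (e+1)) (simple 3 e) ∧
  PT t (simple 3 (e+1)) (simple 2 e) ∧
  PT t (simple 1 e) (simple 1 (e+1)) ∧
  PT t (simple 1 e) (simple 2 (e+1)) ∧
  PT t (simple 1 e) (simple 3 (e+1)) ∧
  PF (simple 1 (e+1)) (simple 1 e) ∧
  PF (simple 1 (e+1)) (simple 2 e) ∧
  PF (simple 1 (e+1)) (simple 3 e) ∧
  PF (simple 2 (e+1)) (simple 1 e) ∧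
  PF (simple 2 (e+1)) (simple 2 e) ∧
  PF (simple 3 (e+1)) (simple 1 e) ∧
  PF (simple 3 (e+1)) (simple 3 e) ∧
  PF (simple 2 e) (simple 1 (e+1)) ∧
  PF (simple 2 e) (simple 2 (e+1)) ∧
  PF (simple 2 e) (simple 3 (e+1)) ∧
  PF (simple 3 e) (simple 1 (e+1)) ∧
  PF (simple 3 e) (simple 2 (e+1)) ∧
  PF (simple 3 e) (simple 3 (e+1))

def BF (t o : ℕ) : Prop :=
  PT t (simple 1 (o+1)) (simple 1 o) ∧
  PT t (simple 2 (o+1)) (simple 1 o) ∧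
  PT t (simple 3 (o+1)) (simple 1 o) ∧
  PT t (simple 2 o) (simple 2 (o+1)) ∧
  PT t (simple 3 o) (simple 3 (o+1)) ∧
  PF (simple 1 (o+1)) (simple 2 o) ∧
  PF (simple 1 (o+1)) (simple 3 o) ∧
  PF (simple 2 (o+1)) (simple 2 o) ∧
  PF (simple 2 (o+1)) (simple 3 o) ∧
  PF (simple 3 (o+1)) (simple 2 o) ∧
  PF (simple 3 (o+1)) (simple 3 o) ∧
  PF (simple 1 o) (simple 1 (o+1)) ∧
  PF (simple 1 o) (simple 2 (o+1)) ∧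
  PF (simple 1 o) (simple 3 (o+1)) ∧
  PF (simple 2 o) (simple 1 (o+1)) ∧
  PF (simple 2 o) (simple 3 (o+1)) ∧
  PF (simple 3 o) (simple 1 (o+1)) ∧
  PF (simple 3 o) (simple 2 (o+1))

lemma stepAB (t E : ℕ) (hE : 1 ≤ E) (h : AF t E) : BF (t+1) (E+1) := by
  obtain ⟨P23, P32, U1, U2, U3, F11, F12, F13, F21, F22, F31, F33,
    G21, G22, G23, G31, G32, G33⟩ := h
  refine ⟨?_, ?_, ?_, ?_, ?_, ?_, ?_, ?_, ?_, ?_, ?_, ?_, ?_, ?_, ?_, ?_, ?_, ?_⟩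
  · -- PT 1_E+1+1 vs 1_E+1
    rw [simple_one (E+1), simple_one (E)]
    exact POS (not_lt_of_nle (nle (E+1+1) (E+1) 1 1 (by omega) (by omega) (by omega) (by omega) (by omega) (by omega)))
      (Or.inr F22) (Or.inl P23) (Or.inl P32) (Or.inr F33)
      G22 G32 G23 G33
      (Or.inr (Or.inl P23))
  · -- PT 2_E+1+1 vs 1_E+1
    rw [simple_two (E+1), simple_one (E)]
    exact POS (not_lt_of_nle (nle (E+1+1) (E+1) 2 1 (by omega) (by omega) (by omega) (by omega) (by omega) (by omega)))
      (Or.inr F12) (Or.inr F13) (Or.inl P32) (Or.inr F33)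
      G21 G31 G23 G33
      (Or.inr (Or.inr (Or.inl P32)))
  · -- PT 3_E+1+1 vs 1_E+1
    rw [simple_three (E+1), simple_one (E)]
    exact POS (not_lt_of_nle (nle (E+1+1) (E+1) 3 1 (by omega) (by omega) (by omega) (by omega) (by omega) (by omega)))
      (Or.inr F12) (Or.inr F13) (Or.inr F22) (Or.inl P23)
      G21 G31 G22 G32
      (Or.inr (Or.inr (Or.inr P23)))
  · -- PT 2_E+1 vs 2_E+1+1
    rw [simple_two (E), simple_two (E+1)]
    exact POS (not_lt_of_nle (nle (E+1) (E+1+1) 2 2 (by omega) (by omega) (by omega) (by omega) (by omega) (by omega)))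
      (Or.inl U1) (Or.inl U3) (Or.inr G31) (Or.inr G33)
      F11 F31 F13 F33
      (Or.inl U1)
  · -- PT 3_E+1 vs 3_E+1+1
    rw [simple_three (E), simple_three (E+1)]
    exact POS (not_lt_of_nle (nle (E+1) (E+1+1) 3 3 (by omega) (by omega) (by omega) (by omega) (by omega) (by omega)))
      (Or.inl U1) (Or.inl U2) (Or.inr G21) (Or.inr G22)
      F11 F21 F12 F22
      (Or.inl U1)
  · -- PF 1_E+1+1 vs 2_E+1
    rw [simple_one (E+1), simple_two (E)]
    exact NEGB (not_lt_of_nle (nle (E+1+1) (E+1) 1 2 (by omega) (by omega) (by omega) (by omega) (by omega) (by omega)))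
      (Or.inr F21) (Or.inl P23) (Or.inr F31) (Or.inr F33)
      (Or.inl ⟨F21, U2⟩)
  · -- PF 1_E+1+1 vs 3_E+1
    rw [simple_one (E+1), simple_three (E)]
    exact NEGB (not_lt_of_nle (nle (E+1+1) (E+1) 1 3 (by omega) (by omega) (by omega) (by omega) (by omega) (by omega)))
      (Or.inr F21) (Or.inr F22) (Or.inr F31) (Or.inl P32)
      (Or.inl ⟨F21, U2⟩)
  · -- PF 2_E+1+1 vs 2_E+1
    rw [simple_two (E+1), simple_two (E)]
    exact NEGB (not_lt_of_nle (nle (E+1+1) (E+1) 2 2 (by omega) (by omega) (by omega) (by omega) (by omega) (by omega)))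
      (Or.inr F11) (Or.inr F13) (Or.inr F31) (Or.inr F33)
      (Or.inl ⟨F11, U1⟩)
  · -- PF 2_E+1+1 vs 3_E+1
    rw [simple_two (E+1), simple_three (E)]
    exact NEGB (not_lt_of_nle (nle (E+1+1) (E+1) 2 3 (by omega) (by omega) (by omega) (by omega) (by omega) (by omega)))
      (Or.inr F11) (Or.inr F12) (Or.inr F31) (Or.inl P32)
      (Or.inl ⟨F11, U1⟩)
  · -- PF 3_E+1+1 vs 2_E+1
    rw [simple_three (E+1), simple_two (E)]
    exact NEGB (not_lt_of_nle (nle (E+1+1) (E+1) 3 2 (by omega) (by omega) (by omega) (by omega) (by omega) (by omega)))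
      (Or.inr F11) (Or.inr F13) (Or.inr F21) (Or.inl P23)
      (Or.inl ⟨F11, U1⟩)
  · -- PF 3_E+1+1 vs 3_E+1
    rw [simple_three (E+1), simple_three (E)]
    exact NEGB (not_lt_of_nle (nle (E+1+1) (E+1) 3 3 (by omega) (by omega) (by omega) (by omega) (by omega) (by omega)))
      (Or.inr F11) (Or.inr F12) (Or.inr F21) (Or.inr F22)
      (Or.inl ⟨F11, U1⟩)
  · -- PF 1_E+1 vs 1_E+1+1
    rw [simple_one (E), simple_one (E+1)]
    exact NEGB (not_lt_of_nle (nle (E+1) (E+1+1) 1 1 (by omega) (by omega) (by omega) (by omega) (by omega) (by omega)))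
      (Or.inr G22) (Or.inr G23) (Or.inr G32) (Or.inr G33)
      (Or.inr (Or.inl ⟨G23, P32⟩))
  · -- PF 1_E+1 vs 2_E+1+1
    rw [simple_one (E), simple_two (E+1)]
    exact NEGB (not_lt_of_nle (nle (E+1) (E+1+1) 1 2 (by omega) (by omega) (by omega) (by omega) (by omega) (by omega)))
      (Or.inr G21) (Or.inr G23) (Or.inr G31) (Or.inr G33)
      (Or.inr (Or.inl ⟨G23, P32⟩))
  · -- PF 1_E+1 vs 3_E+1+1
    rw [simple_one (E), simple_three (E+1)]
    exact NEGB (not_lt_of_nle (nle (E+1) (E+1+1) 1 3 (by omega) (by omega) (by omega) (by omega) (by omega) (by omega)))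
      (Or.inr G21) (Or.inr G22) (Or.inr G31) (Or.inr G32)
      (Or.inr (Or.inr (Or.inr ⟨G32, P23⟩)))
  · -- PF 2_E+1 vs 1_E+1+1
    rw [simple_two (E), simple_one (E+1)]
    exact NEGB (not_lt_of_nle (nle (E+1) (E+1+1) 2 1 (by omega) (by omega) (by omega) (by omega) (by omega) (by omega)))
      (Or.inl U2) (Or.inl U3) (Or.inr G32) (Or.inr G33)
      (Or.inr (Or.inr (Or.inl ⟨G32, P23⟩)))
  · -- PF 2_E+1 vs 3_E+1+1
    rw [simple_two (E), simple_three (E+1)]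
    exact NEGB (not_lt_of_nle (nle (E+1) (E+1+1) 2 3 (by omega) (by omega) (by omega) (by omega) (by omega) (by omega)))
      (Or.inl U1) (Or.inl U2) (Or.inr G31) (Or.inr G32)
      (Or.inr (Or.inr (Or.inr ⟨G32, P23⟩)))
  · -- PF 3_E+1 vs 1_E+1+1
    rw [simple_three (E), simple_one (E+1)]
    exact NEGB (not_lt_of_nle (nle (E+1) (E+1+1) 3 1 (by omega) (by omega) (by omega) (by omega) (by omega) (by omega)))
      (Or.inl U2) (Or.inl U3) (Or.inr G22) (Or.inr G23)
      (Or.inr (Or.inr (Or.inr ⟨G23, P32⟩)))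
  · -- PF 3_E+1 vs 2_E+1+1
    rw [simple_three (E), simple_two (E+1)]
    exact NEGB (not_lt_of_nle (nle (E+1) (E+1+1) 3 2 (by omega) (by omega) (by omega) (by omega) (by omega) (by omega)))
      (Or.inl U1) (Or.inl U3) (Or.inr G21) (Or.inr G23)
      (Or.inr (Or.inr (Or.inr ⟨G23, P32⟩)))
lemma stepBA (t O : ℕ) (hO : 2 ≤ O) (h : BF t O) : AF (t+1) (O+1) := by
  obtain ⟨Q1, Q2, Q3, R2, R3, K12, K13, K22, K23, K32, K33,
    L11, L12, L13, L21, L23, L31, L32⟩ := h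
  refine ⟨?_, ?_, ?_, ?_, ?_, ?_, ?_, ?_, ?_, ?_, ?_, ?_, ?_, ?_, ?_, ?_, ?_, ?_⟩
  · -- PT 2_O+1+1 vs 3_O+1
    rw [simple_two (O+1), simple_three (O)]
    exact POS (not_lt_of_nle (nle (O+1+1) (O+1) 2 3 (by omega) (by omega) (by omega) (by omega) (by omega) (by omega)))
      (Or.inl Q1) (Or.inr K12) (Or.inl Q3) (Or.inr K32)
      L11 L21 L13 L23
      (Or.inl Q1)
  · -- PT 3_O+1+1 vs 2_O+1
    rw [simple_three (O+1), simple_two (O)]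
    exact POS (not_lt_of_nle (nle (O+1+1) (O+1) 3 2 (by omega) (by omega) (by omega) (by omega) (by omega) (by omega)))
      (Or.inl Q1) (Or.inr K13) (Or.inl Q2) (Or.inr K23)
      L11 L31 L12 L32
      (Or.inl Q1)
  · -- PT 1_O+1 vs 1_O+1+1
    rw [simple_one (O), simple_one (O+1)]
    exact POS (not_lt_of_nle (nle (O+1) (O+1+1) 1 1 (by omega) (by omega) (by omega) (by omega) (by omega) (by omega)))
      (Or.inl R2) (Or.inr L23) (Or.inr L32) (Or.inl R3)
      K22 K32 K23 K33
      (Or.inl R2)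
  · -- PT 1_O+1 vs 2_O+1+1
    rw [simple_one (O), simple_two (O+1)]
    exact POS (not_lt_of_nle (nle (O+1) (O+1+1) 1 2 (by omega) (by omega) (by omega) (by omega) (by omega) (by omega)))
      (Or.inr L21) (Or.inr L23) (Or.inr L31) (Or.inl R3)
      K12 K32 K13 K33
      (Or.inr (Or.inr (Or.inr R3)))
  · -- PT 1_O+1 vs 3_O+1+1
    rw [simple_one (O), simple_three (O+1)]
    exact POS (not_lt_of_nle (nle (O+1) (O+1+1) 1 3 (by omega) (by omega) (by omega) (by omega) (by omega) (by omega)))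
      (Or.inr L21) (Or.inl R2) (Or.inr L31) (Or.inr L32)
      K12 K22 K13 K23
      (Or.inr (Or.inl R2))
  · -- PF 1_O+1+1 vs 1_O+1
    rw [simple_one (O+1), simple_one (O)]
    exact NEGB (not_lt_of_nle (nle (O+1+1) (O+1) 1 1 (by omega) (by omega) (by omega) (by omega) (by omega) (by omega)))
      (Or.inr K22) (Or.inr K23) (Or.inr K32) (Or.inr K33)
      (Or.inl ⟨K22, R2⟩)
  · -- PF 1_O+1+1 vs 2_O+1
    rw [simple_one (O+1), simple_two (O)]
    exact NEGB (not_lt_of_nle (nle (O+1+1) (O+1) 1 2 (by omega) (by omega) (by omega) (by omega) (by omega) (by omega)))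
      (Or.inl Q2) (Or.inr K23) (Or.inl Q3) (Or.inr K33)
      (Or.inr (Or.inr (Or.inr ⟨K33, R3⟩)))
  · -- PF 1_O+1+1 vs 3_O+1
    rw [simple_one (O+1), simple_three (O)]
    exact NEGB (not_lt_of_nle (nle (O+1+1) (O+1) 1 3 (by omega) (by omega) (by omega) (by omega) (by omega) (by omega)))
      (Or.inl Q2) (Or.inr K22) (Or.inl Q3) (Or.inr K32)
      (Or.inr (Or.inl ⟨K22, R2⟩))
  · -- PF 2_O+1+1 vs 1_O+1
    rw [simple_two (O+1), simple_one (O)]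
    exact NEGB (not_lt_of_nle (nle (O+1+1) (O+1) 2 1 (by omega) (by omega) (by omega) (by omega) (by omega) (by omega)))
      (Or.inr K12) (Or.inr K13) (Or.inr K32) (Or.inr K33)
      (Or.inr (Or.inr (Or.inr ⟨K33, R3⟩)))
  · -- PF 2_O+1+1 vs 2_O+1
    rw [simple_two (O+1), simple_two (O)]
    exact NEGB (not_lt_of_nle (nle (O+1+1) (O+1) 2 2 (by omega) (by omega) (by omega) (by omega) (by omega) (by omega)))
      (Or.inl Q1) (Or.inr K13) (Or.inl Q3) (Or.inr K33)
      (Or.inr (Or.inr (Or.inr ⟨K33, R3⟩)))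
  · -- PF 3_O+1+1 vs 1_O+1
    rw [simple_three (O+1), simple_one (O)]
    exact NEGB (not_lt_of_nle (nle (O+1+1) (O+1) 3 1 (by omega) (by omega) (by omega) (by omega) (by omega) (by omega)))
      (Or.inr K12) (Or.inr K13) (Or.inr K22) (Or.inr K23)
      (Or.inr (Or.inr (Or.inl ⟨K22, R2⟩)))
  · -- PF 3_O+1+1 vs 3_O+1
    rw [simple_three (O+1), simple_three (O)]
    exact NEGB (not_lt_of_nle (nle (O+1+1) (O+1) 3 3 (by omega) (by omega) (by omega) (by omega) (by omega) (by omega)))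
      (Or.inl Q1) (Or.inr K12) (Or.inl Q2) (Or.inr K22)
      (Or.inr (Or.inr (Or.inr ⟨K22, R2⟩)))
  · -- PF 2_O+1 vs 1_O+1+1
    rw [simple_two (O), simple_one (O+1)]
    exact NEGB (not_lt_of_nle (nle (O+1) (O+1+1) 2 1 (by omega) (by omega) (by omega) (by omega) (by omega) (by omega)))
      (Or.inr L12) (Or.inr L13) (Or.inr L32) (Or.inl R3)
      (Or.inl ⟨L12, Q2⟩)
  · -- PF 2_O+1 vs 2_O+1+1
    rw [simple_two (O), simple_two (O+1)]
    exact NEGB (not_lt_of_nle (nle (O+1) (O+1+1) 2 2 (by omega) (by omega) (by omega) (by omega) (by omega) (by omega)))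
      (Or.inr L11) (Or.inr L13) (Or.inr L31) (Or.inl R3)
      (Or.inl ⟨L11, Q1⟩)
  · -- PF 2_O+1 vs 3_O+1+1
    rw [simple_two (O), simple_three (O+1)]
    exact NEGB (not_lt_of_nle (nle (O+1) (O+1+1) 2 3 (by omega) (by omega) (by omega) (by omega) (by omega) (by omega)))
      (Or.inr L11) (Or.inr L12) (Or.inr L31) (Or.inr L32)
      (Or.inl ⟨L11, Q1⟩)
  · -- PF 3_O+1 vs 1_O+1+1
    rw [simple_three (O), simple_one (O+1)]
    exact NEGB (not_lt_of_nle (nle (O+1) (O+1+1) 3 1 (by omega) (by omega) (by omega) (by omega) (by omega) (by omega)))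
      (Or.inr L12) (Or.inr L13) (Or.inl R2) (Or.inr L23)
      (Or.inl ⟨L12, Q2⟩)
  · -- PF 3_O+1 vs 2_O+1+1
    rw [simple_three (O), simple_two (O+1)]
    exact NEGB (not_lt_of_nle (nle (O+1) (O+1+1) 3 2 (by omega) (by omega) (by omega) (by omega) (by omega) (by omega)))
      (Or.inr L11) (Or.inr L13) (Or.inr L21) (Or.inr L23)
      (Or.inl ⟨L11, Q1⟩)
  · -- PF 3_O+1 vs 3_O+1+1
    rw [simple_three (O), simple_three (O+1)]
    exact NEGB (not_lt_of_nle (nle (O+1) (O+1+1) 3 3 (by omega) (by omega) (by omega) (by omega) (by omega) (by omega)))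
      (Or.inr L11) (Or.inr L12) (Or.inr L21) (Or.inl R2)
      (Or.inl ⟨L11, Q1⟩)
lemma baseA : AF 0 1 := by
  have P21 : PT 0 (simple 2 1) (simple 1 0) := PT_of_lt lt_21_10
  have P31 : PT 0 (simple 3 1) (simple 1 0) := PT_of_lt lt_31_10
  have P11 : PT 0 (simple 1 1) (simple 1 0) := PT_of_lt lt_11_10
  have Pa : PT 0 (simple 2 0) (simple 2 1) := PT_of_lt lt_20_21
  have Pb : PT 0 (simple 2 0) (simple 3 1) := PT_of_lt lt_20_31
  have Pc : PT 0 (simple 3 0) (simple 2 1) := PT_of_lt lt_30_21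
  have Pd : PT 0 (simple 3 0) (simple 3 1) := PT_of_lt lt_30_31
  have N10a : PF (simple 1 0) (simple 1 1) := pf_10_11
  have N10b : PF (simple 1 0) (simple 2 1) := pf_10_21
  have N10c : PF (simple 1 0) (simple 3 1) := pf_10_31
  have N20 : PF (simple 2 0) (simple 1 1) := pf_20_11
  have N30 : PF (simple 3 0) (simple 1 1) := pf_30_11
  have M12 : PF (simple 1 1) (simple 2 0) := pf_11_20
  have M13 : PF (simple 1 1) (simple 3 0) := pf_11_30
  have M22 : PF (simple 2 1) (simple 2 0) := pf_21_20
  have M23 : PF (simple 2 1) (simple 3 0) := pf_21_30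
  have M32 : PF (simple 3 1) (simple 2 0) := pf_31_20
  have M33 : PF (simple 3 1) (simple 3 0) := pf_31_30
  refine ⟨PT_of_lt lt_22_31, PT_of_lt lt_32_21, PT_of_lt lt_11_12, PT_of_lt lt_11_22,
    PT_of_lt lt_11_32, ?_, ?_, ?_, ?_, ?_, ?_, ?_, ?_, ?_, ?_, ?_, ?_, ?_⟩
  · -- PF 1_0+1+1 vs 1_1
    rw [simple_one (0+1), simple_1_1]
    exact NEGB (not_lt_of_nle (nle (0+1+1) (1) 1 1 (by omega) (by omega) (by omega) (by omega) (by omega) (by omega)))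
      (Or.inr M22) (Or.inr M23) (Or.inr M32) (Or.inr M33)
      (Or.inl ⟨M22, Pa⟩)
  · -- PF 1_0+1+1 vs 2_1
    rw [simple_one (0+1), simple_2_1]
    exact NEGB (not_lt_of_nle (nle (0+1+1) (1) 1 2 (by omega) (by omega) (by omega) (by omega) (by omega) (by omega)))
      (Or.inl P21) (Or.inr M23) (Or.inl P31) (Or.inr M33)
      (Or.inr (Or.inl ⟨M23, Pc⟩))
  · -- PF 1_0+1+1 vs 3_1
    rw [simple_one (0+1), simple_3_1]
    exact NEGB (not_lt_of_nle (nle (0+1+1) (1) 1 3 (by omega) (by omega) (by omega) (by omega) (by omega) (by omega)))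
      (Or.inl P21) (Or.inr M22) (Or.inl P31) (Or.inr M32)
      (Or.inr (Or.inl ⟨M22, Pa⟩))
  · -- PF 2_0+1+1 vs 1_1
    rw [simple_two (0+1), simple_1_1]
    exact NEGB (not_lt_of_nle (nle (0+1+1) (1) 2 1 (by omega) (by omega) (by omega) (by omega) (by omega) (by omega)))
      (Or.inr M12) (Or.inr M13) (Or.inr M32) (Or.inr M33)
      (Or.inr (Or.inr (Or.inl ⟨M32, Pb⟩)))
  · -- PF 2_0+1+1 vs 2_1
    rw [simple_two (0+1), simple_2_1]
    exact NEGB (not_lt_of_nle (nle (0+1+1) (1) 2 2 (by omega) (by omega) (by omega) (by omega) (by omega) (by omega)))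
      (Or.inl P11) (Or.inr M13) (Or.inl P31) (Or.inr M33)
      (Or.inr (Or.inr (Or.inr ⟨M33, Pd⟩)))
  · -- PF 3_0+1+1 vs 1_1
    rw [simple_three (0+1), simple_1_1]
    exact NEGB (not_lt_of_nle (nle (0+1+1) (1) 3 1 (by omega) (by omega) (by omega) (by omega) (by omega) (by omega)))
      (Or.inr M12) (Or.inr M13) (Or.inr M22) (Or.inr M23)
      (Or.inr (Or.inr (Or.inl ⟨M22, Pa⟩)))
  · -- PF 3_0+1+1 vs 3_1
    rw [simple_three (0+1), simple_3_1]
    exact NEGB (not_lt_of_nle (nle (0+1+1) (1) 3 3 (by omega) (by omega) (by omega) (by omega) (by omega) (by omega)))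
      (Or.inl P11) (Or.inr M12) (Or.inl P21) (Or.inr M22)
      (Or.inr (Or.inr (Or.inr ⟨M22, Pa⟩)))
  · -- PF 2_1 vs 1_0+1+1
    rw [simple_2_1, simple_one (0+1)]
    exact NEGB (not_lt_of_nle (nle (1) (0+1+1) 2 1 (by omega) (by omega) (by omega) (by omega) (by omega) (by omega)))
      (Or.inr N10b) (Or.inr N10c) (Or.inl Pc) (Or.inl Pd)
      (Or.inl ⟨N10b, P21⟩)
  · -- PF 2_1 vs 2_0+1+1
    rw [simple_2_1, simple_two (0+1)]
    exact NEGB (not_lt_of_nle (nle (1) (0+1+1) 2 2 (by omega) (by omega) (by omega) (by omega) (by omega) (by omega)))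
      (Or.inr N10a) (Or.inr N10c) (Or.inr N30) (Or.inl Pd)
      (Or.inl ⟨N10a, P11⟩)
  · -- PF 2_1 vs 3_0+1+1
    rw [simple_2_1, simple_three (0+1)]
    exact NEGB (not_lt_of_nle (nle (1) (0+1+1) 2 3 (by omega) (by omega) (by omega) (by omega) (by omega) (by omega)))
      (Or.inr N10a) (Or.inr N10b) (Or.inr N30) (Or.inl Pc)
      (Or.inl ⟨N10a, P11⟩)
  · -- PF 3_1 vs 1_0+1+1
    rw [simple_3_1, simple_one (0+1)]
    exact NEGB (not_lt_of_nle (nle (1) (0+1+1) 3 1 (by omega) (by omega) (by omega) (by omega) (by omega) (by omega)))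
      (Or.inr N10b) (Or.inr N10c) (Or.inl Pa) (Or.inl Pb)
      (Or.inl ⟨N10b, P21⟩)
  · -- PF 3_1 vs 2_0+1+1
    rw [simple_3_1, simple_two (0+1)]
    exact NEGB (not_lt_of_nle (nle (1) (0+1+1) 3 2 (by omega) (by omega) (by omega) (by omega) (by omega) (by omega)))
      (Or.inr N10a) (Or.inr N10c) (Or.inr N20) (Or.inl Pb)
      (Or.inl ⟨N10a, P11⟩)
  · -- PF 3_1 vs 3_0+1+1
    rw [simple_3_1, simple_three (0+1)]
    exact NEGB (not_lt_of_nle (nle (1) (0+1+1) 3 3 (by omega) (by omega) (by omega) (by omega) (by omega) (by omega)))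
      (Or.inr N10a) (Or.inr N10b) (Or.inr N20) (Or.inl Pa)
      (Or.inl ⟨N10a, P11⟩)

end GV
namespace GV

lemma chain : ∀ j : ℕ, AF (2*j) (2*j+1) ∧ BF (2*j+1) (2*j+2) := by
  intro j
  induction j with
  | zero =>
    constructor
    · exact baseA
    · have h := stepAB 0 1 (by omega) baseA
      exact h
  | succ j IH =>
    obtain ⟨hA, hB⟩ := IH
    have hA'' : AF (2*(j+1)) (2*(j+1)+1) := stepBA (2*j+1) (2*j+2) (by omega) hB
    refine ⟨hA'', ?_⟩
    exact stepAB (2*(j+1)) (2*(j+1)+1) (by omega) hA''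

end GV

/-- for every `i ≥ 0`, `1_{i+1}` is prudently incomparable with
both `2_i` and `3_i` from player 1's perspective. -/
theorem one_succ_incomparable_with_two_three :
    ∀ i : ℕ, GV.pIncomp 1 (GV.simple 1 (i + 1)) (GV.simple 2 i) ∧
      GV.pIncomp 1 (GV.simple 1 (i + 1)) (GV.simple 3 i) := by
  intro i
  rcases Nat.even_or_odd' i with ⟨k, hk | hk⟩
  · -- i = 2k even
    cases k with
    | zero =>
      subst hk
      norm_num
      exact ⟨⟨fun h => GV.pf_11_20 _ h, fun h => GV.pf_20_11 _ h⟩,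
        ⟨fun h => GV.pf_11_30 _ h, fun h => GV.pf_30_11 _ h⟩⟩
    | succ k =>
      subst hk
      obtain ⟨-, -, -, -, -, K12, K13, -, -, -, -, -, -, -, L21, -, L31, -⟩ :=
        (GV.chain k).2
      exact ⟨⟨fun h => K12 _ h, fun h => L21 _ h⟩,
        ⟨fun h => K13 _ h, fun h => L31 _ h⟩⟩
  · -- i = 2k+1 odd
    subst hk
    obtain ⟨-, -, -, -, -, -, F12, F13, -, -, -, -, G21, -, -, G31, -, -⟩ :=
      (GV.chain k).1
    exact ⟨⟨fun h => F12 _ h, fun h => G21 _ h⟩,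
      ⟨fun h => F13 _ h, fun h => G31 _ h⟩⟩
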